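/- (Incompleteness of Lipton's rule.) Let Σ₀ = {a,b₁,b₂,c} ∪ {β} be distinct actions. Let G′ be the CFG with locations {p,q}, initial p, exit q, and edges (p,a,q), (p,β,q), (p,c,q); let G_β be the CFG with locations {u,s,v}, initial u, exit v, and edges (u,b₁,s), (s,b₂,v); let G be the CFG with locations {p,s,q}, initial p, exit q, and edges (p,a,q), (p,b₁,s), (s,b₂,q), (p,c,q); and let F = (G′,(β,G_β)) be the corresponding atomic fusion of G. Let I = {a,b₁,b₂,c}² ∖ {(a,b₂),(b₁,c)}. Then F is sound with respect to I, although b₁ is not a right-mover and b₂ is not a left-mover with respect to I. -/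

import Mathlib

/-!
Common definitions: control flow graphs, traces, interleavings of parameterized
programs, the covering preorder, Mazurkiewicz reductions, atomic fusions,
sync-point instrumentations, locks and general synchronization alphabets.
-/

/-- `PathRel E ℓ w ℓ'` : the word `w` labels a path from `ℓ` to `ℓ'` in the
labeled graph with edge relation `E`. -/
inductive PathRel {L α : Type} (E : L → α → L → Prop) : L → List α → L → Prop
  | nil (ℓ : L) : PathRel E ℓ [] ℓ
  | cons {ℓ ℓ' ℓ'' : L} {a : α} {w : List α} :
      E ℓ a ℓ' → PathRel E ℓ' w ℓ'' → PathRel E ℓ (a :: w) ℓ''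

/-- A control flow graph over the alphabet `α`. -/
structure CFG (α : Type) where
  Loc : Type
  loc_finite : Finite Loc
  Edge : Loc → α → Loc → Prop
  init : Loc
  exit : Loc
  init_ne_exit : init ≠ exit

namespace CFG

variable {α : Type}

/-- The set of words labeling paths from the initial to the exit location. -/
def traces (G : CFG α) : Set (List α) := { w | PathRel G.Edge G.init w G.exit }

/-- The set of actions occurring in `G`. -/
def alphabet (G : CFG α) : Set α := { a | ∃ ℓ ℓ', G.Edge ℓ a ℓ' }

/-- Action `a` labels at most one edge of `G`. -/
def UniqueAct (G : CFG α) (a : α) : Prop :=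
  ∀ ⦃ℓ₁ ℓ₁' ℓ₂ ℓ₂' : G.Loc⦄, G.Edge ℓ₁ a ℓ₁' → G.Edge ℓ₂ a ℓ₂' → ℓ₁ = ℓ₂ ∧ ℓ₁' = ℓ₂'

/-- The transition relation is finite. -/
def EdgeFinite (G : CFG α) : Prop :=
  { p : G.Loc × α × G.Loc | G.Edge p.1 p.2.1 p.2.2 }.Finite

/-- Every location is reachable from the initial location, and the exit
location is reachable from every location. -/
def Reachable (G : CFG α) : Prop :=
  ∀ ℓ : G.Loc, (∃ w, PathRel G.Edge G.init w ℓ) ∧ (∃ w, PathRel G.Edge ℓ w G.exit)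

/-- Well-formedness of a CFG over a plain alphabet (finitely many transitions,
reachability conditions, and every action labels at most one edge). -/
def WF (G : CFG α) : Prop := G.EdgeFinite ∧ G.Reachable ∧ ∀ a : α, G.UniqueAct a

end CFG

/-! ### Interleavings -/

/-- `τ↑i` : the projection of an interleaving to the actions of thread `i`. -/
def projThread {α : Type} (i : ℕ) (τ : List (α × ℕ)) : List α :=
  (τ.filter (fun x => x.2 == i)).map Prod.fst

/-- The interleavings of the parameterized program with thread template `G`
and no synchronization. -/
def progLang {α : Type} (G : CFG α) : Set (List (α × ℕ)) :=
  { τ | ∀ i : ℕ, projThread i τ ∈ G.traces ∨ projThread i τ = [] }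

/-- One swap of two adjacent commuting indexed actions of different threads. -/
def SwapStep {α : Type} (I : Set (α × α)) (τ τ' : List (α × ℕ)) : Prop :=
  ∃ (ρ σ : List (α × ℕ)) (a b : α) (i j : ℕ),
    (a, b) ∈ I ∧ i ≠ j ∧
      τ = ρ ++ (a, i) :: (b, j) :: σ ∧ τ' = ρ ++ (b, j) :: (a, i) :: σ

/-- The covering preorder `⊑_I`: the smallest reflexive-transitive relation
allowing swaps of adjacent `I`-commuting actions of different threads. -/
def CoveredBy {α : Type} (I : Set (α × α)) : List (α × ℕ) → List (α × ℕ) → Prop :=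
  Relation.ReflTransGen (SwapStep I)

/-- `L₁` is a Mazurkiewicz reduction (up to `I`) of `L₂`. -/
def MazReduction {α : Type} (I : Set (α × α)) (L₁ L₂ : Set (List (α × ℕ))) : Prop :=
  L₁ ⊆ L₂ ∧ ∀ τ ∈ L₂, ∃ τ' ∈ L₁, CoveredBy I τ τ'

/-! ### Morphisms -/

/-- Image of a word under a morphism `μ : α → 𝒫(β^*)`. -/
def morphWord {α β : Type} (μ : α → Set (List β)) : List α → Set (List β)
  | [] => {[]}
  | x :: w => { s | ∃ u ∈ μ x, ∃ v ∈ morphWord μ w, s = u ++ v }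

/-- Image of a language under a morphism. -/
def morphLang {α β : Type} (μ : α → Set (List β)) (L : Set (List α)) : Set (List β) :=
  ⋃ w ∈ L, morphWord μ w

/-! ### Atomic fusions -/

/-- Locations of the graph obtained from `G'` by substituting `Gβ k` for the
edge labeled `β k`: locations of `G'` together with the interior locations of
each `Gβ k`. -/
def fuseLoc {α : Type} (G' : CFG α) {n : ℕ} (Gβ : Fin n → CFG α) : Type :=
  G'.Loc ⊕ Σ k : Fin n, { ℓ : (Gβ k).Loc // ℓ ≠ (Gβ k).init ∧ ℓ ≠ (Gβ k).exit }

open Classical in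
/-- Embedding of the locations of `Gβ k` into the substituted graph, identifying
the initial and exit locations of `Gβ k` with the endpoints of the `β k` edge. -/
noncomputable def fuseEmb {α : Type} (G' : CFG α) {n : ℕ} (Gβ : Fin n → CFG α)
    (src tgt : Fin n → G'.Loc) (k : Fin n) (ℓ : (Gβ k).Loc) : fuseLoc G' Gβ :=
  if h1 : ℓ = (Gβ k).init then Sum.inl (src k)
  else if h2 : ℓ = (Gβ k).exit then Sum.inl (tgt k)
  else Sum.inr ⟨k, ℓ, h1, h2⟩

/-- Edges of the graph obtained from `G'` by substituting each `Gβ k` for the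
edge labeled `β k` (with endpoints `src k`, `tgt k`). -/
def fuseEdge {α : Type} (G' : CFG α) {n : ℕ} (β : Fin n → α) (Gβ : Fin n → CFG α)
    (src tgt : Fin n → G'.Loc) (x : fuseLoc G' Gβ) (a : α) (y : fuseLoc G' Gβ) : Prop :=
  (∃ ℓ ℓ', G'.Edge ℓ a ℓ' ∧ (∀ k, a ≠ β k) ∧ x = Sum.inl ℓ ∧ y = Sum.inl ℓ') ∨
  (∃ k ℓ ℓ', (Gβ k).Edge ℓ a ℓ' ∧
      x = fuseEmb G' Gβ src tgt k ℓ ∧ y = fuseEmb G' Gβ src tgt k ℓ')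

/-- An atomic fusion `F = (G', (β 0, Gβ 0), …, (β (n-1), Gβ (n-1)))` of the CFG `G`:
`G` is (up to isomorphism) obtained from `G'` by replacing, for each `k`, the unique
edge labeled `β k` by the graph `Gβ k`. -/
structure AtomicFusion {α : Type} (G : CFG α) (n : ℕ) where
  G' : CFG α
  β : Fin n → α
  Gβ : Fin n → CFG α
  β_inj : Function.Injective β
  src : Fin n → G'.Loc
  tgt : Fin n → G'.Loc
  β_edge : ∀ k, G'.Edge (src k) (β k) (tgt k)
  Gβ_alph : ∀ k a, a ∈ (Gβ k).alphabet → ∀ k', a ≠ β k'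
  Gβ_nonempty : ∀ k, ((Gβ k).traces).Nonempty
  iso : G.Loc ≃ fuseLoc G' Gβ
  iso_init : iso G.init = Sum.inl G'.init
  iso_exit : iso G.exit = Sum.inl G'.exit
  iso_edge : ∀ ℓ a ℓ', G.Edge ℓ a ℓ' ↔ fuseEdge G' β Gβ src tgt (iso ℓ) a (iso ℓ')

namespace AtomicFusion

variable {α : Type} {G : CFG α} {n : ℕ}

/-- The fusion morphism `μ_F`: maps each block symbol `β k` to `traces (Gβ k)`
and any other action `a` to `{[a]}`. -/
def morph (F : AtomicFusion G n) (a : α) : Set (List α) :=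
  { w | (∃ k, a = F.β k ∧ w ∈ (F.Gβ k).traces) ∨ ((∀ k, a ≠ F.β k) ∧ w = [a]) }

/-- The lift `μ̂_F` of the fusion morphism to indexed actions. -/
def morphIdx (F : AtomicFusion G n) (x : α × ℕ) : Set (List (α × ℕ)) :=
  { w | ∃ u ∈ F.morph x.1, w = u.map (fun a => (a, x.2)) }

/-- Soundness of an atomic fusion wrt. the commutativity relation `I`:
`μ̂_F(L(G'))` is a Mazurkiewicz reduction (up to `I`) of `L(G)`. -/
def Sound (F : AtomicFusion G n) (I : Set (α × α)) : Prop :=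
  MazReduction I (morphLang F.morphIdx (progLang F.G')) (progLang G)

end AtomicFusion

/-! ### Movers -/

/-- `a` is a left-mover if `(b, a) ∈ I` for all `b ∈ Σ(G)`. -/
def LeftMover {α : Type} (G : CFG α) (I : Set (α × α)) (a : α) : Prop :=
  ∀ b ∈ G.alphabet, (b, a) ∈ I

/-- `a` is a right-mover if `(a, b) ∈ I` for all `b ∈ Σ(G)`. -/
def RightMover {α : Type} (G : CFG α) (I : Set (α × α)) (a : α) : Prop :=
  ∀ b ∈ G.alphabet, (a, b) ∈ I

/-! ### Sync-points -/

/-- The word `⟨•:t₁⟩ … ⟨•:t_n⟩` where `T = {t₁ < … < t_n}`; the sync-point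
symbol `•` is represented by `none`. -/
def bulletWord {α : Type} (T : Finset ℕ) : List (Option α × ℕ) :=
  (T.sort (· ≤ ·)).map (fun t => ((none : Option α), t))

/-- A concatenation of words, each of which either consists of program actions
of threads in `T` only, or equals `⟨•:T⟩`. -/
inductive PhaseWord {α : Type} (T : Finset ℕ) : List (Option α × ℕ) → Prop
  | nil : PhaseWord T []
  | act {w τ : List (Option α × ℕ)} :
      (∀ x ∈ w, (∃ a : α, x.1 = some a) ∧ x.2 ∈ T) → PhaseWord T τ → PhaseWord T (w ++ τ)
  | bullet {τ : List (Option α × ℕ)} : PhaseWord T τ → PhaseWord T (bulletWord T ++ τ)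

/-- `sync_{•,T}`: while the threads in `T` are running they pass sync-points
together; at some point a subset `T' ⊊ T` of threads remains. -/
inductive SyncT {α : Type} : Finset ℕ → List (Option α × ℕ) → Prop
  | base : SyncT ∅ []
  | step {T T' : Finset ℕ} {τ₁ τ₂ : List (Option α × ℕ)} :
      T' ⊂ T → PhaseWord T τ₁ → SyncT T' τ₂ → SyncT T (τ₁ ++ τ₂)

/-- `sync_•(τ̂)` : there is a finite set `T ⊆ ℕ` with `sync_{•,T}(τ̂)`. -/
def SyncBullet {α : Type} (τ : List (Option α × ℕ)) : Prop := ∃ T : Finset ℕ, SyncT T τ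

/-- Restriction of an indexed word over `Σ ∪ {•}` to its `Σ`-indexed letters. -/
def restrictSigma {α : Type} (τ : List (Option α × ℕ)) : List (α × ℕ) :=
  τ.filterMap (fun x => x.1.map (fun a => (a, x.2)))

/-- `G'` is a sync-point instrumentation of `G`: erasing `•` from the traces of
`G'` yields exactly the traces of `G`, injectively. -/
structure SyncInstr {α : Type} (G : CFG α) (G' : CFG (Option α)) : Prop where
  proj_traces : G.traces = (fun τ => τ.filterMap id) '' G'.traces
  proj_inj : ∀ τ₁ ∈ G'.traces, ∀ τ₂ ∈ G'.traces, τ₁.filterMap id = τ₂.filterMap id → τ₁ = τ₂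

/-- Well-formedness of a CFG over `Σ ∪ {•}` (every action of `Σ` labels at most
one edge; `•` may label several edges). -/
def CFG.WFsync {α : Type} (G' : CFG (Option α)) : Prop :=
  G'.EdgeFinite ∧ G'.Reachable ∧ ∀ a : α, G'.UniqueAct (some a)

/-- The language `L(G, G')` of the sync-point instrumented program. -/
def instrLang {α : Type} (G' : CFG (Option α)) : Set (List (α × ℕ)) :=
  { τ | ∃ τ' : List (Option α × ℕ), τ = restrictSigma τ' ∧ SyncBullet τ' ∧
      ∀ i : ℕ, projThread i τ' ∈ G'.traces ∨ projThread i τ' = [] }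

/-- `|w|_•` : the number of occurrences of the sync-point symbol in `w`. -/
def bulletCount {α : Type} (w : List (Option α)) : ℕ := (w.filter (fun x => x.isNone)).length

/-- The phase order `⤳`: `a` can occur in a strictly later phase than `b` in
some execution of the instrumented program. -/
def PhaseOrder {α : Type} (G' : CFG (Option α)) (a b : α) : Prop :=
  ∃ τ' : List (Option α × ℕ), SyncBullet τ' ∧ restrictSigma τ' ∈ instrLang G' ∧
    ∃ i j : ℕ, i ≠ j ∧
      ∃ τ₁ σ₁, projThread i τ' = τ₁ ++ some a :: σ₁ ∧
      ∃ τ₂ σ₂, projThread j τ' = τ₂ ++ some b :: σ₂ ∧ bulletCount τ₁ < bulletCount τ₂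

/-! ### General synchronization alphabets -/

/-- A synchronization alphabet: a set `σs` of synchronization actions together
with a predicate `Φ` on indexed words over `Σ ∪ S`, preserved by all
permutations of thread indices. -/
structure SyncAlphabet (α σs : Type) where
  Φ : List ((α ⊕ σs) × ℕ) → Prop
  perm_inv : ∀ (π : Equiv.Perm ℕ) (τ : List ((α ⊕ σs) × ℕ)),
      Φ τ → Φ (τ.map (fun x => (x.1, π x.2)))

/-- Restriction of an indexed word over `Σ ∪ S` to its `Σ`-indexed letters. -/
def restrictActions {α σs : Type} (τ' : List ((α ⊕ σs) × ℕ)) : List (α × ℕ) :=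
  τ'.filterMap (fun x => (x.1.getLeft?).map (fun a => (a, x.2)))

/-- The language of the parameterized program `P = ((S, Φ), G)`. -/
def syncLang {α σs : Type} (SA : SyncAlphabet α σs) (G : CFG (α ⊕ σs)) :
    Set (List (α × ℕ)) :=
  { τ | ∃ τ', τ = restrictActions τ' ∧ SA.Φ τ' ∧
      ∀ i : ℕ, projThread i τ' ∈ G.traces ∨ projThread i τ' = [] }

/-- The configuration `C` is coverable in `P = ((S, Φ), G)`. -/
def Coverable {α σs : Type} (SA : SyncAlphabet α σs) (G : CFG (α ⊕ σs))
    {r : ℕ} (C : Fin r → G.Loc) : Prop :=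
  ∃ (τ' : List ((α ⊕ σs) × ℕ)) (t : Fin r → ℕ), SA.Φ τ' ∧ Function.Injective t ∧
    ∀ k, PathRel G.Edge G.init (projThread (t k) τ') (C k)

/-- Well-formedness of a CFG over `Σ ∪ S` (only actions of `Σ` are required to
label at most one edge). -/
def CFG.WFsum {α σs : Type} (G : CFG (α ⊕ σs)) : Prop :=
  G.EdgeFinite ∧ G.Reachable ∧ ∀ a : α, G.UniqueAct (Sum.inl a)

/-! ### Locks -/

/-- The valid projections of a lock-respecting execution to a single lock `m`:
a sequence of blocks `⟨acq(m) rel(m) : i⟩`, optionally followed by a single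
`⟨acq(m) : i⟩`.  `true` stands for `acq(m)`, `false` for `rel(m)`. -/
inductive LockSeq : List (Bool × ℕ) → Prop
  | nil : LockSeq []
  | final (i : ℕ) : LockSeq [(true, i)]
  | block (i : ℕ) {w : List (Bool × ℕ)} : LockSeq w → LockSeq ((true, i) :: (false, i) :: w)

/-- Projection of an indexed word over `Σ ∪ S_lk` to the indexed occurrences of
`acq(m)`/`rel(m)` for the lock `m`. -/
def lockProj {α M : Type} [DecidableEq M] (m : M) (τ' : List ((α ⊕ (M × Bool)) × ℕ)) :
    List (Bool × ℕ) :=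
  τ'.filterMap (fun x => match x.1 with
    | Sum.inl _ => none
    | Sum.inr p => if p.1 = m then some (p.2, x.2) else none)

/-- The lock synchronization predicate `sync_lk`. -/
def SyncLk {α M : Type} [DecidableEq M] (τ' : List ((α ⊕ (M × Bool)) × ℕ)) : Prop :=
  ∀ m : M, LockSeq (lockProj m τ')

/-- The language of a program `P = ((S_lk, sync_lk), G)` with locks. -/
def lockLang {α M : Type} [DecidableEq M] (G : CFG (α ⊕ (M × Bool))) :
    Set (List (α × ℕ)) :=
  { τ | ∃ τ', τ = restrictActions τ' ∧ SyncLk τ' ∧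
      ∀ i : ℕ, projThread i τ' ∈ G.traces ∨ projThread i τ' = [] }

/-- Coverability of a configuration in a program with locks. -/
def CoverableLk {α M : Type} [DecidableEq M] (G : CFG (α ⊕ (M × Bool)))
    {r : ℕ} (C : Fin r → G.Loc) : Prop :=
  ∃ (τ' : List ((α ⊕ (M × Bool)) × ℕ)) (t : Fin r → ℕ), SyncLk τ' ∧ Function.Injective t ∧
    ∀ k, PathRel G.Edge G.init (projThread (t k) τ') (C k)

/-! ### Locks and sync-points combined -/

/-- Restriction of an indexed word over `Σ ∪ S_lk ∪ {•}` to `(Σ ∪ S_lk)`-indexed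
letters. -/
def restrictSyncWord {α M : Type} (τ' : List (Option (α ⊕ (M × Bool)) × ℕ)) :
    List ((α ⊕ (M × Bool)) × ℕ) :=
  τ'.filterMap (fun x => x.1.map (fun e => (e, x.2)))

/-- Restriction of an indexed word over `Σ ∪ S_lk ∪ {•}` to `(Σ ∪ {•})`-indexed
letters. -/
def restrictBulletWord {α M : Type} (τ' : List (Option (α ⊕ (M × Bool)) × ℕ)) :
    List (Option α × ℕ) :=
  τ'.filterMap (fun x => match x.1 with
    | none => some ((none : Option α), x.2)
    | some (Sum.inl a) => some (some a, x.2)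
    | some (Sum.inr _) => none)

/-- Restriction of an indexed word over `Σ ∪ S_lk ∪ {•}` to `Σ`-indexed letters. -/
def restrictActionsO {α M : Type} (τ' : List (Option (α ⊕ (M × Bool)) × ℕ)) :
    List (α × ℕ) :=
  τ'.filterMap (fun x => match x.1 with
    | some (Sum.inl a) => some (a, x.2)
    | _ => none)

/-- The language `L(P̂, G')` of a lock program instrumented with sync-points. -/
def instrLockLang {α M : Type} [DecidableEq M] (G' : CFG (Option (α ⊕ (M × Bool)))) :
    Set (List (α × ℕ)) :=
  { τ | ∃ τ', τ = restrictActionsO τ' ∧ SyncLk (restrictSyncWord τ') ∧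
      SyncBullet (restrictBulletWord τ') ∧
      ∀ i : ℕ, projThread i τ' ∈ G'.traces ∨ projThread i τ' = [] }

/-- The thread template `G` with locations `p = 0`, `s = 1`, `q = 2` (initial `p`,
exit `q`) and edges `(p,a,q)`, `(p,b₁,s)`, `(s,b₂,q)`, `(p,c,q)`. -/
def exG {α : Type} (a b₁ b₂ c : α) : CFG α where
  Loc := Fin 3
  loc_finite := inferInstance
  Edge := fun ℓ x ℓ' =>
    (ℓ = 0 ∧ x = a ∧ ℓ' = 2) ∨ (ℓ = 0 ∧ x = b₁ ∧ ℓ' = 1) ∨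
    (ℓ = 1 ∧ x = b₂ ∧ ℓ' = 2) ∨ (ℓ = 0 ∧ x = c ∧ ℓ' = 2)
  init := 0
  exit := 2
  init_ne_exit := by decide

/-- The fused thread template `G'` with locations `p = 0`, `q = 1` (initial `p`, exit `q`)
and edges `(p,a,q)`, `(p,β,q)`, `(p,c,q)`. -/
def exG' {α : Type} (a c β : α) : CFG α where
  Loc := Fin 2
  loc_finite := inferInstance
  Edge := fun ℓ x ℓ' =>
    (ℓ = 0 ∧ x = a ∧ ℓ' = 1) ∨ (ℓ = 0 ∧ x = β ∧ ℓ' = 1) ∨ (ℓ = 0 ∧ x = c ∧ ℓ' = 1)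
  init := 0
  exit := 1
  init_ne_exit := by decide

/-- The atomic block body `G_β` with locations `u = 0`, `s = 1`, `v = 2` (initial `u`,
exit `v`) and edges `(u,b₁,s)`, `(s,b₂,v)`. -/
def exGβ {α : Type} (b₁ b₂ : α) : CFG α where
  Loc := Fin 3
  loc_finite := inferInstance
  Edge := fun ℓ x ℓ' => (ℓ = 0 ∧ x = b₁ ∧ ℓ' = 1) ∨ (ℓ = 1 ∧ x = b₂ ∧ ℓ' = 2)
  init := 0
  exit := 2
  init_ne_exit := by decide

/-- The fusion morphism `μ_F` of the atomic fusion `F = (G', (β, G_β))`: it maps `β` to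
`traces(G_β)` and every other action `x` to `{[x]}`. -/
def exMorph {α : Type} (β b₁ b₂ : α) (x : α) : Set (List α) :=
  { w | (x = β ∧ w ∈ (exGβ b₁ b₂).traces) ∨ (x ≠ β ∧ w = [x]) }

/-- The lift `μ̂_F` of the fusion morphism to indexed actions. -/
def exMorphIdx {α : Type} (β b₁ b₂ : α) (x : α × ℕ) : Set (List (α × ℕ)) :=
  { w | ∃ u ∈ exMorph β b₁ b₂ x.1, w = u.map (fun y => (y, x.2)) }

/-!
In an interleaving of `L(G)` every thread runs `a`, `c` or `b₁ b₂`. The action `a` commutes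
to the left of every action of `G` and `c` to the right of every action, so all `a`s can be moved
to the front and all `c`s to the back. The remaining `b`-actions commute with each other, so the
middle part can be serialized thread by thread into blocks `⟨b₁:j⟩⟨b₂:j⟩`. The result is the
image under `μ̂_F` of the `G'`-interleaving in which those threads execute `β` instead. Lipton's
rule is nevertheless not applicable because of the two missing pairs `(b₁, c)` and `(a, b₂)`.
-/

section Interleavings

variable {α : Type}

@[simp]
lemma projThread_nil (i : ℕ) : projThread i ([] : List (α × ℕ)) = [] := rfl

@[simp]
lemma projThread_cons (i : ℕ) (x : α × ℕ) (τ : List (α × ℕ)) :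
    projThread i (x :: τ) = if x.2 = i then x.1 :: projThread i τ else projThread i τ := by
  by_cases h : x.2 = i <;> simp [projThread, h]

@[simp]
lemma projThread_append (i : ℕ) (τ σ : List (α × ℕ)) :
    projThread i (τ ++ σ) = projThread i τ ++ projThread i σ := by
  simp [projThread]

lemma mem_projThread {τ : List (α × ℕ)} {x : α × ℕ} (hx : x ∈ τ) : x.1 ∈ projThread x.2 τ :=
  List.mem_map.mpr ⟨x, List.mem_filter.mpr ⟨hx, by simp⟩, rfl⟩

lemma projThread_filter_fst (i : ℕ) (p : α → Bool) (τ : List (α × ℕ)) :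
    projThread i (τ.filter (fun x => p x.1)) = (projThread i τ).filter p := by
  induction τ with
  | nil => rfl
  | cons x τ ih => by_cases h : x.2 = i <;> by_cases hp : p x.1 <;> simp [*]

lemma projThread_filter_snd_ne (i j : ℕ) (τ : List (α × ℕ)) :
    projThread j (τ.filter (fun x => x.2 ≠ i)) = if j = i then [] else projThread j τ := by
  induction τ with
  | nil => simp
  | cons x τ ih => by_cases h : x.2 = i <;> by_cases h' : x.2 = j <;> simp_all

lemma filter_snd_eq (i : ℕ) (τ : List (α × ℕ)) :
    τ.filter (fun x => x.2 = i) = (projThread i τ).map (fun a => (a, i)) := by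
  induction τ with
  | nil => rfl
  | cons x τ ih =>
    by_cases h : x.2 = i
    · obtain ⟨a, j⟩ := x
      simp only at h
      subst h
      simp [ih]
    · simp [h, ih]

lemma projThread_map_thread (i j : ℕ) (u : List α) :
    projThread j (u.map fun a => (a, i)) = if i = j then u else [] := by
  induction u with
  | nil => simp
  | cons a u ih => by_cases h : i = j <;> simp_all

lemma projThread_map_pair (a : α) {l : List ℕ} (hl : l.Nodup) (i : ℕ) :
    projThread i (l.map fun j => (a, j)) = if i ∈ l then [a] else [] := by
  induction l with
  | nil => simp
  | cons j l ih =>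
    obtain ⟨hj, hl⟩ := List.nodup_cons.mp hl
    by_cases h : j = i
    · subst h
      simp [ih hl, hj]
    · simp [ih hl, h, Ne.symm h]

end Interleavings

section Covering

variable {α : Type} {I : Set (α × α)}

lemma SwapStep.append_left {τ τ' : List (α × ℕ)} (ρ : List (α × ℕ)) (h : SwapStep I τ τ') :
    SwapStep I (ρ ++ τ) (ρ ++ τ') := by
  obtain ⟨ρ', σ, a, b, i, j, hab, hij, rfl, rfl⟩ := h
  exact ⟨ρ ++ ρ', σ, a, b, i, j, hab, hij, by simp, by simp⟩

lemma SwapStep.append_right {τ τ' : List (α × ℕ)} (σ : List (α × ℕ)) (h : SwapStep I τ τ') :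
    SwapStep I (τ ++ σ) (τ' ++ σ) := by
  obtain ⟨ρ, σ', a, b, i, j, hab, hij, rfl, rfl⟩ := h
  exact ⟨ρ, σ' ++ σ, a, b, i, j, hab, hij, by simp, by simp⟩

lemma CoveredBy.append {τ τ' σ σ' : List (α × ℕ)} (hτ : CoveredBy I τ τ')
    (hσ : CoveredBy I σ σ') : CoveredBy I (τ ++ σ) (τ' ++ σ') :=
  (hτ.lift (· ++ σ) fun _ _ h => h.append_right σ).trans
    (hσ.lift (τ' ++ ·) fun _ _ h => h.append_left τ')

lemma coveredBy_cons_append {x : α × ℕ} {ρ : List (α × ℕ)}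
    (hρ : ∀ y ∈ ρ, (x.1, y.1) ∈ I ∧ x.2 ≠ y.2) (σ : List (α × ℕ)) :
    CoveredBy I (x :: (ρ ++ σ)) (ρ ++ x :: σ) := by
  induction ρ with
  | nil => exact .refl
  | cons y ρ ih =>
    have hy := hρ y List.mem_cons_self
    have hswap : SwapStep I (x :: y :: (ρ ++ σ)) (y :: x :: (ρ ++ σ)) :=
      ⟨[], ρ ++ σ, x.1, y.1, x.2, y.2, hy.1, hy.2, rfl, rfl⟩
    exact .head hswap (CoveredBy.append (.refl (a := [y]))
      (ih fun z hz => hρ z (List.mem_cons_of_mem y hz)))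

lemma coveredBy_filter_append (p : α × ℕ → Bool) {τ : List (α × ℕ)}
    (h : ∀ x ∈ τ, ∀ y ∈ τ, p x = false → p y = true → (x.1, y.1) ∈ I ∧ x.2 ≠ y.2) :
    CoveredBy I τ (τ.filter p ++ τ.filter (fun x => !p x)) := by
  induction τ with
  | nil => exact .refl
  | cons x τ ih =>
    have hτ : CoveredBy I (x :: τ) (x :: (τ.filter p ++ τ.filter (fun x => !p x))) :=
      CoveredBy.append (.refl (a := [x]))
        (ih fun u hu v hv => h u (List.mem_cons_of_mem x hu) v (List.mem_cons_of_mem x hv))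
    by_cases hx : p x
    · simpa [hx] using hτ
    · simp only [List.filter_cons, hx]
      refine hτ.trans (coveredBy_cons_append (fun y hy => ?_) _)
      rw [List.mem_filter] at hy
      exact h x List.mem_cons_self y (List.mem_cons_of_mem x hy.1) (by simpa using hx) hy.2

lemma exists_coveredBy_flatMap_threads {w : List (α × ℕ)}
    (hw : ∀ x ∈ w, ∀ y ∈ w, (x.1, y.1) ∈ I) :
    ∃ l : List ℕ, l.Nodup ∧ (∀ j, j ∈ l ↔ projThread j w ≠ []) ∧
      CoveredBy I w (l.flatMap fun j => (projThread j w).map fun a => (a, j)) := by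
  induction h : w.length using Nat.strong_induction_on generalizing w with
  | _ n ih =>
  subst h
  rcases w with _ | ⟨x, w'⟩
  · exact ⟨[], List.nodup_nil, by simp, .refl⟩
  set w := x :: w'
  set r := w.filter (fun y => y.2 ≠ x.2)
  have hr : ∀ j, projThread j r = if j = x.2 then [] else projThread j w :=
    fun j => projThread_filter_snd_ne x.2 j w
  have hlen : r.length < w.length :=
    List.length_filter_lt_length_iff_exists.mpr ⟨x, List.mem_cons_self, by simp⟩
  obtain ⟨l, hl, hmem, hcov⟩ := ih _ hlen (w := r)
    (fun u hu v hv => hw u (List.mem_of_mem_filter hu) v (List.mem_of_mem_filter hv)) rfl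
  have hx : x.2 ∉ l := by simp [hmem, hr]
  have hsplit : CoveredBy I w (w.filter (fun y => y.2 = x.2) ++ r) := by
    simpa [r] using coveredBy_filter_append (I := I) (fun y => y.2 = x.2)
      (fun u hu v hv hu' hv' => ⟨hw u hu v hv, by simp_all⟩)
  refine ⟨x.2 :: l, List.nodup_cons.mpr ⟨hx, hl⟩, fun j => ?_, ?_⟩
  · by_cases hj : j = x.2
    · subst hj
      exact iff_of_true List.mem_cons_self (List.ne_nil_of_mem (mem_projThread List.mem_cons_self))
    · simp [hj, hmem, hr]
  · rw [List.flatMap_cons, ← filter_snd_eq]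
    refine hsplit.trans (CoveredBy.append .refl ?_)
    convert hcov using 1
    refine List.flatMap_congr fun j hj => ?_
    rw [hr, if_neg (ne_of_mem_of_not_mem hj hx)]

end Covering

section Morphisms

variable {α β : Type}

def liftIdx (μ : α → Set (List β)) (x : α × ℕ) : Set (List (β × ℕ)) :=
  { w | ∃ u ∈ μ x.1, w = u.map (fun y => (y, x.2)) }

@[simp]
lemma morphWord_nil (μ : α → Set (List β)) : morphWord μ [] = {[]} := rfl

@[simp]
lemma morphWord_singleton (μ : α → Set (List β)) (x : α) : morphWord μ [x] = μ x := by
  ext s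
  simp [morphWord]

lemma flatMap_mem_morphWord {μ : α → Set (List β)} {f : α → List β} {u : List α}
    (hf : ∀ x ∈ u, f x ∈ μ x) : u.flatMap f ∈ morphWord μ u := by
  induction u with
  | nil => rfl
  | cons x u ih =>
    exact ⟨f x, hf x List.mem_cons_self, u.flatMap f,
      ih fun y hy => hf y (List.mem_cons_of_mem x hy), rfl⟩

lemma projThread_mem_morphWord_of_mem {μ : α → Set (List β)} {σ : List (α × ℕ)}
    {τ : List (β × ℕ)} (hτ : τ ∈ morphWord (liftIdx μ) σ) (i : ℕ) :
    projThread i τ ∈ morphWord μ (projThread i σ) := by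
  induction σ generalizing τ with
  | nil => simp_all
  | cons x σ ih =>
    obtain ⟨_, ⟨u, hu, rfl⟩, v, hv, rfl⟩ := hτ
    by_cases hx : x.2 = i
    · rw [projThread_cons, if_pos hx, projThread_append, projThread_map_thread, if_pos hx]
      exact ⟨u, hu, _, ih hv, rfl⟩
    · simpa [hx, projThread_map_thread] using ih hv

lemma morphLang_liftIdx_subset_progLang {μ : α → Set (List α)} {G' G : CFG α}
    (hμ : ∀ w ∈ G'.traces, morphWord μ w ⊆ G.traces) :
    morphLang (liftIdx μ) (progLang G') ⊆ progLang G := by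
  simp only [morphLang, Set.iUnion_subset_iff]
  intro σ hσ τ hτ i
  have hi := projThread_mem_morphWord_of_mem hτ i
  rcases hσ i with h | h
  · exact .inl (hμ _ h hi)
  · rw [h] at hi
    exact .inr hi

end Morphisms

section Paths

variable {L α : Type} {E : L → α → L → Prop}

@[simp]
lemma pathRel_nil_iff {ℓ ℓ' : L} : PathRel E ℓ [] ℓ' ↔ ℓ = ℓ' :=
  ⟨fun h => by cases h; rfl, fun h => h ▸ .nil ℓ⟩

@[simp]
lemma pathRel_cons_iff {ℓ ℓ'' : L} {a : α} {w : List α} :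
    PathRel E ℓ (a :: w) ℓ'' ↔ ∃ ℓ', E ℓ a ℓ' ∧ PathRel E ℓ' w ℓ'' :=
  ⟨fun h => by cases h with | cons he hw => exact ⟨_, he, hw⟩,
    fun ⟨_, he, hw⟩ => .cons he hw⟩

lemma PathRel.exists_edge_of_mem {ℓ ℓ' : L} {w : List α} (hw : PathRel E ℓ w ℓ') {a : α}
    (ha : a ∈ w) : ∃ ℓ₁ ℓ₂, E ℓ₁ a ℓ₂ := by
  induction hw with
  | nil => simp at ha
  | cons he _ ih =>
    rcases List.mem_cons.mp ha with rfl | ha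
    · exact ⟨_, _, he⟩
    · exact ih ha

lemma mem_alphabet_of_mem_progLang {G : CFG α} {τ : List (α × ℕ)} (hτ : τ ∈ progLang G)
    {x : α × ℕ} (hx : x ∈ τ) : x.1 ∈ G.alphabet := by
  have h := mem_projThread hx
  rcases hτ x.2 with ht | ht
  · exact PathRel.exists_edge_of_mem ht h
  · simp [ht] at h

end Paths

section Example

variable {α : Type} {a b₁ b₂ c β : α} {I : Set (α × α)} {τ : List (α × ℕ)}

lemma traces_exG (a b₁ b₂ c : α) : (exG a b₁ b₂ c).traces = {[a], [b₁, b₂], [c]} := by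
  ext w
  rcases w with _ | ⟨x, _ | ⟨y, _ | ⟨z, w⟩⟩⟩ <;>
    simp [CFG.traces, exG, Fin.exists_fin_succ]

lemma traces_exG' (a c β : α) : (exG' a c β).traces = {[a], [β], [c]} := by
  ext w
  rcases w with _ | ⟨x, _ | ⟨y, w⟩⟩ <;> simp [CFG.traces, exG', Fin.exists_fin_succ]

lemma traces_exGβ (b₁ b₂ : α) : (exGβ b₁ b₂).traces = {[b₁, b₂]} := by
  ext w
  rcases w with _ | ⟨x, _ | ⟨y, _ | ⟨z, w⟩⟩⟩ <;> simp [CFG.traces, exGβ, Fin.exists_fin_succ]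

lemma alphabet_exG (a b₁ b₂ c : α) : (exG a b₁ b₂ c).alphabet = {a, b₁, b₂, c} := by
  ext x
  simp [CFG.alphabet, exG, Fin.exists_fin_succ]
  tauto

lemma exMorph_of_ne {x : α} (hx : x ≠ β) : exMorph β b₁ b₂ x = {[x]} := by
  simp [exMorph, hx]

lemma exMorph_self (β b₁ b₂ : α) : exMorph β b₁ b₂ β = {[b₁, b₂]} := by
  simp [exMorph, traces_exGβ]

lemma morphLang_exMorphIdx_subset (haβ : a ≠ β) (hcβ : c ≠ β) :
    morphLang (exMorphIdx β b₁ b₂) (progLang (exG' a c β)) ⊆ progLang (exG a b₁ b₂ c) := by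
  refine morphLang_liftIdx_subset_progLang fun w hw => ?_
  rw [traces_exG'] at hw
  rcases hw with rfl | rfl | rfl <;>
    simp [traces_exG, exMorph_of_ne, exMorph_self, haβ, hcβ]

def blockExpand [DecidableEq α] (β b₁ b₂ : α) (x : α × ℕ) : List (α × ℕ) :=
  if x.1 = β then [(b₁, x.2), (b₂, x.2)] else [x]

lemma blockExpand_mem_exMorphIdx [DecidableEq α] (x : α × ℕ) :
    blockExpand β b₁ b₂ x ∈ exMorphIdx β b₁ b₂ x := by
  by_cases hx : x.1 = β
  · exact ⟨[b₁, b₂], by simp [hx, exMorph_self], by simp [blockExpand, hx]⟩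
  · exact ⟨[x.1], by simp [exMorph_of_ne hx], by simp [blockExpand, hx]⟩

lemma projThread_of_mem_progLang_exG (hτ : τ ∈ progLang (exG a b₁ b₂ c)) (i : ℕ) :
    projThread i τ = [a] ∨ projThread i τ = [b₁, b₂] ∨ projThread i τ = [c] ∨
      projThread i τ = [] := by
  rcases hτ i with h | h
  · rw [traces_exG] at h
    simp only [Set.mem_insert_iff, Set.mem_singleton_iff] at h
    tauto
  · exact .inr (.inr (.inr h))

lemma snd_ne_of_mem_progLang_exG (hab₁ : a ≠ b₁) (hab₂ : a ≠ b₂) (hb₁c : b₁ ≠ c)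
    (hb₂c : b₂ ≠ c) (hτ : τ ∈ progLang (exG a b₁ b₂ c)) {x y : α × ℕ} (hx : x ∈ τ) (hy : y ∈ τ)
    (hy₁ : y.1 = a ∨ y.1 = c) (hxy : x.1 ≠ y.1) : x.2 ≠ y.2 := by
  intro h
  have hmx := mem_projThread hx
  have hmy := mem_projThread hy
  rw [h] at hmx
  rcases projThread_of_mem_progLang_exG hτ y.2 with h | h | h | h <;>
    simp only [h, List.mem_cons, List.not_mem_nil, or_false] at hmx hmy <;>
    grind

lemma coveredBy_filter_a_append_filter_append_filter_c [DecidableEq α] (hab₁ : a ≠ b₁)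
    (hab₂ : a ≠ b₂) (hac : a ≠ c) (hb₁c : b₁ ≠ c) (hb₂c : b₂ ≠ c)
    (hτ : τ ∈ progLang (exG a b₁ b₂ c))
    (ha : LeftMover (exG a b₁ b₂ c) I a) (hc : RightMover (exG a b₁ b₂ c) I c) :
    CoveredBy I τ (τ.filter (fun x => x.1 = a) ++ τ.filter (fun x => x.1 ≠ a ∧ x.1 ≠ c) ++
      τ.filter (fun x => x.1 = c)) := by
  have hsep {x y : α × ℕ} := snd_ne_of_mem_progLang_exG (x := x) (y := y) hab₁ hab₂ hb₁c hb₂c hτ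
  have hA := coveredBy_filter_append (I := I) (fun x => x.1 = a) (τ := τ)
    fun x hx y hy hxa hya => by
      simp only [decide_eq_true_eq, decide_eq_false_iff_not] at hxa hya
      exact ⟨hya ▸ ha _ (mem_alphabet_of_mem_progLang hτ hx), hsep hx hy (.inl hya) (hya ▸ hxa)⟩
  have hR := coveredBy_filter_append (I := I) (fun x => x.1 ≠ c)
    (τ := τ.filter (fun x => x.1 ≠ a)) fun x hx y hy hxc hyc => by
      simp only [List.mem_filter] at hx hy
      simp only [decide_not, Bool.not_eq_eq_eq_not, Bool.not_true, Bool.not_false,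
        decide_eq_true_eq, decide_eq_false_iff_not] at hxc hyc
      exact ⟨hxc ▸ hc _ (mem_alphabet_of_mem_progLang hτ hy.1),
        (hsep hy.1 hx.1 (.inr hxc) (hxc ▸ hyc)).symm⟩
  simp only [List.filter_filter] at hR
  rw [List.append_assoc]
  refine hA.trans (CoveredBy.append .refl ?_)
  convert hR using 2
  · simp
  all_goals exact List.filter_congr fun x _ => by grind

lemma projThread_filters_of_mem_progLang_exG [DecidableEq α] (hab₁ : a ≠ b₁) (hab₂ : a ≠ b₂)
    (hac : a ≠ c) (hb₁c : b₁ ≠ c) (hb₂c : b₂ ≠ c) (hτ : τ ∈ progLang (exG a b₁ b₂ c)) (j : ℕ) :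
    (projThread j (τ.filter (fun x => x.1 = a)),
      projThread j (τ.filter (fun x => x.1 ≠ a ∧ x.1 ≠ c)), projThread j (τ.filter (fun x => x.1 = c)))
      ∈ ({([a], [], []), ([], [b₁, b₂], []), ([], [], [c]), ([], [], [])} : Set _) := by
  simp only [projThread_filter_fst j (fun u => decide (u = a)),
    projThread_filter_fst j (fun u => decide (u ≠ a ∧ u ≠ c)),
    projThread_filter_fst j (fun u => decide (u = c))]
  rcases projThread_of_mem_progLang_exG hτ j with h | h | h | h <;> rw [h] <;> simp [*, Ne.symm]

lemma exists_coveredBy_mem_morphLang_exG' [DecidableEq α] (hab₁ : a ≠ b₁) (hab₂ : a ≠ b₂)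
    (hac : a ≠ c) (hb₁c : b₁ ≠ c) (hb₂c : b₂ ≠ c) (haβ : a ≠ β) (hcβ : c ≠ β)
    (ha : LeftMover (exG a b₁ b₂ c) I a) (hc : RightMover (exG a b₁ b₂ c) I c)
    (hb : ∀ x ∈ ({b₁, b₂} : Set α), ∀ y ∈ ({b₁, b₂} : Set α), (x, y) ∈ I)
    (hτ : τ ∈ progLang (exG a b₁ b₂ c)) :
    ∃ τ' ∈ morphLang (exMorphIdx β b₁ b₂) (progLang (exG' a c β)), CoveredBy I τ τ' := by
  have hproj := projThread_filters_of_mem_progLang_exG hab₁ hab₂ hac hb₁c hb₂c hτ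
  set A := τ.filter (fun x => x.1 = a)
  set B := τ.filter (fun x => x.1 ≠ a ∧ x.1 ≠ c)
  set C := τ.filter (fun x => x.1 = c)
  have hB : ∀ x ∈ B, x.1 ∈ ({b₁, b₂} : Set α) := fun x hx => by
    have hx' := List.mem_filter.mp hx
    have := mem_alphabet_of_mem_progLang hτ hx'.1
    simp only [alphabet_exG, Set.mem_insert_iff, Set.mem_singleton_iff] at this
    grind
  obtain ⟨l, hl, hlB, hcovB⟩ :=
    exists_coveredBy_flatMap_threads (I := I) fun x hx y hy => hb _ (hB x hx) _ (hB y hy)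
  set σ := A ++ l.map (fun j => (β, j)) ++ C
  refine ⟨σ.flatMap (blockExpand β b₁ b₂), ?_, ?_⟩
  · refine Set.mem_biUnion (x := σ) (fun j => ?_)
      (flatMap_mem_morphWord fun x _ => blockExpand_mem_exMorphIdx x)
    simp only [σ, projThread_append, projThread_map_pair β hl, hlB, traces_exG']
    rcases hproj j with h | h | h | h <;> simp only [Set.mem_singleton_iff, Prod.mk.injEq] at h <;>
      simp [h]
  · have hexpand : ∀ D : List (α × ℕ), (∀ x ∈ D, x.1 ≠ β) → D.flatMap (blockExpand β b₁ b₂) = D :=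
      fun D hD => (List.flatMap_congr fun x hx => by simp [blockExpand, hD x hx]).trans
        (List.flatMap_singleton' D)
    have hS : (l.map fun j => (β, j)).flatMap (blockExpand β b₁ b₂) =
        l.flatMap fun j => (projThread j B).map fun u => (u, j) := by
      rw [List.flatMap_map]
      refine List.flatMap_congr fun j hj => ?_
      rcases hproj j with h | h | h | h <;> simp only [Set.mem_singleton_iff, Prod.mk.injEq] at h <;>
        simp_all [blockExpand]
    rw [List.flatMap_append, List.flatMap_append, hexpand A (by simp_all [A]),
      hexpand C (by simp_all [C]), hS]
    exact (coveredBy_filter_a_append_filter_append_filter_c hab₁ hab₂ hac hb₁c hb₂c hτ ha hc).trans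
      (CoveredBy.append (CoveredBy.append .refl hcovB) .refl)

end Example

theorem stmt_12_general {α : Type} (a b₁ b₂ c β : α)
    (h1 : a ≠ b₁) (h2 : a ≠ b₂) (h3 : a ≠ c) (h4 : a ≠ β)
    (h6 : b₁ ≠ c) (h8 : b₂ ≠ c) (h10 : c ≠ β)
    (I : Set (α × α))
    (hI : I = (({a, b₁, b₂, c} : Set α) ×ˢ ({a, b₁, b₂, c} : Set α)) \ {(a, b₂), (b₁, c)}) :
    MazReduction I (morphLang (exMorphIdx β b₁ b₂) (progLang (exG' a c β)))
        (progLang (exG a b₁ b₂ c)) ∧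
      ¬ RightMover (exG a b₁ b₂ c) I b₁ ∧
      ¬ LeftMover (exG a b₁ b₂ c) I b₂ := by
  classical
  have ha : LeftMover (exG a b₁ b₂ c) I a := by
    simp [LeftMover, alphabet_exG, hI, h2, h3]
  have hc : RightMover (exG a b₁ b₂ c) I c := by
    simp [RightMover, alphabet_exG, hI, Ne.symm h3, Ne.symm h6]
  have hb : ∀ x ∈ ({b₁, b₂} : Set α), ∀ y ∈ ({b₁, b₂} : Set α), (x, y) ∈ I := by
    simp [hI, Ne.symm h1, Ne.symm h2, h6, h8]
  refine ⟨⟨morphLang_exMorphIdx_subset h4 h10, fun τ hτ =>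
    exists_coveredBy_mem_morphLang_exG' h1 h2 h3 h6 h8 h4 h10 ha hc hb hτ⟩, fun h => ?_, fun h => ?_⟩
  · exact (hI ▸ h c (by simp [alphabet_exG])).2 (by simp)
  · exact (hI ▸ h a (by simp [alphabet_exG])).2 (by simp)

/-- Incompleteness of Lipton's rule. For the atomic fusion
`F = (G', (β, G_β))` of `G` and `I = {a,b₁,b₂,c}² ∖ {(a,b₂),(b₁,c)}`:
`F` is sound wrt. `I` (i.e. `μ̂_F(L(G'))` is a Mazurkiewicz reduction up to `I` of `L(G)`),
although `b₁` is not a right-mover and `b₂` is not a left-mover wrt. `I`. -/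
theorem stmt_12 {α : Type} (a b₁ b₂ c β : α)
    (h1 : a ≠ b₁) (h2 : a ≠ b₂) (h3 : a ≠ c) (h4 : a ≠ β) (h5 : b₁ ≠ b₂)
    (h6 : b₁ ≠ c) (h7 : b₁ ≠ β) (h8 : b₂ ≠ c) (h9 : b₂ ≠ β) (h10 : c ≠ β)
    (I : Set (α × α))
    (hI : I = (({a, b₁, b₂, c} : Set α) ×ˢ ({a, b₁, b₂, c} : Set α)) \ {(a, b₂), (b₁, c)}) :
    MazReduction I (morphLang (exMorphIdx β b₁ b₂) (progLang (exG' a c β)))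
        (progLang (exG a b₁ b₂ c)) ∧
      ¬ RightMover (exG a b₁ b₂ c) I b₁ ∧
      ¬ LeftMover (exG a b₁ b₂ c) I b₂ :=
  stmt_12_general a b₁ b₂ c β h1 h2 h3 h4 h6 h8 h10 I hI
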